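/- For C-module functors F, G : M → N between C-module categories, a C-module natural transformation φ : F → G, and objects M, N of M with all internal homs existing, the square [φ_M, G(N)] ∘ [G] = [F(M), φ_N] ∘ [F] commutes as morphisms [M,N] → [F(M), G(N)]. -/

import Mathlib

open CategoryTheory MonoidalCategory

universe v₁ v₂ v₃ u₁ u₂ u₃

/-- A left module category structure of a monoidal category `C` on a category `D`. -/
structure CModule (C : Type u₁) [Category.{v₁} C] [MonoidalCategory C]
    (D : Type u₂) [Category.{v₂} D] where
  act : C ⥤ D ⥤ D
  a : ∀ (X Y : C) (m : D), (act.obj X).obj ((act.obj Y).obj m) ≅ (act.obj (X ⊗ Y)).obj m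
  a_nat_left : ∀ {X X' : C} (f : X ⟶ X') (Y : C) (m : D),
    (act.map f).app ((act.obj Y).obj m) ≫ (a X' Y m).hom
      = (a X Y m).hom ≫ (act.map (f ▷ Y)).app m
  a_nat_mid : ∀ (X : C) {Y Y' : C} (g : Y ⟶ Y') (m : D),
    (act.obj X).map ((act.map g).app m) ≫ (a X Y' m).hom
      = (a X Y m).hom ≫ (act.map (X ◁ g)).app m
  a_nat_right : ∀ (X Y : C) {m m' : D} (h : m ⟶ m'),
    (act.obj X).map ((act.obj Y).map h) ≫ (a X Y m').hom
      = (a X Y m).hom ≫ (act.obj (X ⊗ Y)).map h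
  u : ∀ m : D, (act.obj (𝟙_ C)).obj m ≅ m
  u_nat : ∀ {m m' : D} (h : m ⟶ m'),
    (act.obj (𝟙_ C)).map h ≫ (u m').hom = (u m).hom ≫ h
  pentagon : ∀ (X Y Z : C) (m : D),
    (act.obj X).map (a Y Z m).hom ≫ (a X (Y ⊗ Z) m).hom ≫ (act.map (α_ X Y Z).inv).app m
      = (a X Y ((act.obj Z).obj m)).hom ≫ (a (X ⊗ Y) Z m).hom
  triangle : ∀ (X : C) (m : D),
    (act.obj X).map (u m).hom = (a X (𝟙_ C) m).hom ≫ (act.map (ρ_ X).hom).app m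

namespace CModule

variable {C : Type u₁} [Category.{v₁} C] [MonoidalCategory C]
variable {D : Type u₂} [Category.{v₂} D] {E : Type u₃} [Category.{v₃} E]

/-- `(H, ev)` is an (action) internal hom `[m, n]` for the module category `P`. -/
def IsInternalHom (P : CModule C D) (m n : D) (H : C)
    (ev : (P.act.obj H).obj m ⟶ n) : Prop :=
  ∀ (U : C) (f : (P.act.obj U).obj m ⟶ n),
    ∃! t : U ⟶ H, (P.act.map t).app m ≫ ev = f

end CModule

/-- A `C`-module functor between module categories. -/
structure CModuleFunctor {C : Type u₁} [Category.{v₁} C] [MonoidalCategory C]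
    {D : Type u₂} [Category.{v₂} D] {E : Type u₃} [Category.{v₃} E]
    (P : CModule C D) (Q : CModule C E) where
  F : D ⥤ E
  e : ∀ (X : C) (m : D), F.obj ((P.act.obj X).obj m) ≅ (Q.act.obj X).obj (F.obj m)
  e_nat_left : ∀ {X X' : C} (f : X ⟶ X') (m : D),
    F.map ((P.act.map f).app m) ≫ (e X' m).hom
      = (e X m).hom ≫ (Q.act.map f).app (F.obj m)
  e_nat_right : ∀ (X : C) {m m' : D} (h : m ⟶ m'),
    F.map ((P.act.obj X).map h) ≫ (e X m').hom
      = (e X m).hom ≫ (Q.act.obj X).map (F.map h)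
  assoc' : ∀ (X Y : C) (m : D),
    F.map (P.a X Y m).hom ≫ (e (X ⊗ Y) m).hom
      = (e X ((P.act.obj Y).obj m)).hom ≫ (Q.act.obj X).map (e Y m).hom
          ≫ (Q.a X Y (F.obj m)).hom
  unit' : ∀ m : D, F.map (P.u m).hom = (e (𝟙_ C) m).hom ≫ (Q.u (F.obj m)).hom

/-- The `C`-module condition on a natural transformation between `C`-module functors. -/
def IsModuleNatTrans {C : Type u₁} [Category.{v₁} C] [MonoidalCategory C]
    {D : Type u₂} [Category.{v₂} D] {E : Type u₃} [Category.{v₃} E]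
    {P : CModule C D} {Q : CModule C E} (Φ Ψ : CModuleFunctor P Q)
    (φ : Φ.F ⟶ Ψ.F) : Prop :=
  ∀ (X : C) (m : D),
    (Φ.e X m).hom ≫ (Q.act.obj X).map (φ.app m)
      = φ.app ((P.act.obj X).obj m) ≫ (Ψ.e X m).hom

/-! Both composites land in the internal hom `[F(m), G(n)]`, so it suffices to compare them after
evaluation. Evaluating either one gives `F(ev_{m,n}) ≫ φ_n` (precomposed with `(F²)⁻¹`): along
`[G]` this uses the module condition on `φ`, along `[F]` only the naturality of `φ`. -/

namespace CModule

variable {C : Type u₁} [Category.{v₁} C] [MonoidalCategory C] {D : Type u₂} [Category.{v₂} D]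

theorem IsInternalHom.hom_ext {P : CModule C D} {m n : D} {H : C}
    {ev : (P.act.obj H).obj m ⟶ n} (hH : P.IsInternalHom m n H ev) {U : C} {t₁ t₂ : U ⟶ H}
    (h : (P.act.map t₁).app m ≫ ev = (P.act.map t₂).app m ≫ ev) : t₁ = t₂ :=
  (hH U _).unique h rfl

end CModule

theorem IsModuleNatTrans.map_app_comp_e_inv
    {C : Type u₁} [Category.{v₁} C] [MonoidalCategory C]
    {D : Type u₂} [Category.{v₂} D] {E : Type u₃} [Category.{v₃} E]
    {P : CModule C D} {Q : CModule C E} {Φ Ψ : CModuleFunctor P Q} {φ : Φ.F ⟶ Ψ.F}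
    (hφ : IsModuleNatTrans Φ Ψ φ) (X : C) (m : D) :
    (Q.act.obj X).map (φ.app m) ≫ (Ψ.e X m).inv
      = (Φ.e X m).inv ≫ φ.app ((P.act.obj X).obj m) := by
  rw [Iso.comp_inv_eq, Category.assoc, ← hφ X m, Iso.inv_hom_id_assoc]

theorem moduleNatTrans_internalHom_square_general
    {C : Type u₁} [Category.{v₁} C] [MonoidalCategory C]
    {D : Type u₂} [Category.{v₂} D] {E : Type u₃} [Category.{v₃} E]
    (P : CModule C D) (Q : CModule C E)
    (Φ Ψ : CModuleFunctor P Q)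
    (φ : Φ.F ⟶ Ψ.F) (hφ : IsModuleNatTrans Φ Ψ φ)
    (m n : D)
    (Hmn : C) (evmn : (P.act.obj Hmn).obj m ⟶ n)
    (KF : C) (evF : (Q.act.obj KF).obj (Φ.F.obj m) ⟶ Φ.F.obj n)
    (KG : C) (evG : (Q.act.obj KG).obj (Ψ.F.obj m) ⟶ Ψ.F.obj n)
    (KFG : C) (evFG : (Q.act.obj KFG).obj (Φ.F.obj m) ⟶ Ψ.F.obj n)
    (hKFG : Q.IsInternalHom (Φ.F.obj m) (Ψ.F.obj n) KFG evFG)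
    -- `[F] : [m,n] → [F(m),F(n)]`
    (brF : Hmn ⟶ KF)
    (hbrF : (Q.act.map brF).app (Φ.F.obj m) ≫ evF = (Φ.e Hmn m).inv ≫ Φ.F.map evmn)
    -- `[G] : [m,n] → [G(m),G(n)]`
    (brG : Hmn ⟶ KG)
    (hbrG : (Q.act.map brG).app (Ψ.F.obj m) ≫ evG = (Ψ.e Hmn m).inv ≫ Ψ.F.map evmn)
    -- `[F(m), φ_n] : [F(m),F(n)] → [F(m),G(n)]`
    (postφ : KF ⟶ KFG)
    (hpostφ : (Q.act.map postφ).app (Φ.F.obj m) ≫ evFG = evF ≫ φ.app n)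
    -- `[φ_m, G(n)] : [G(m),G(n)] → [F(m),G(n)]`
    (preφ : KG ⟶ KFG)
    (hpreφ : (Q.act.map preφ).app (Φ.F.obj m) ≫ evFG
      = (Q.act.obj KG).map (φ.app m) ≫ evG) :
    brG ≫ preφ = brF ≫ postφ := by
  refine hKFG.hom_ext ?_
  calc (Q.act.map (brG ≫ preφ)).app (Φ.F.obj m) ≫ evFG
      = (Q.act.map brG).app (Φ.F.obj m) ≫ (Q.act.obj KG).map (φ.app m) ≫ evG := by
        simp only [Functor.map_comp, NatTrans.comp_app, Category.assoc, hpreφ]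
    _ = (Q.act.obj Hmn).map (φ.app m) ≫ (Ψ.e Hmn m).inv ≫ Ψ.F.map evmn := by
        rw [← NatTrans.naturality_assoc, hbrG]
    _ = (Φ.e Hmn m).inv ≫ Φ.F.map evmn ≫ φ.app n := by
        rw [← Category.assoc, IsModuleNatTrans.map_app_comp_e_inv hφ, Category.assoc,
          φ.naturality]
    _ = (Q.act.map (brF ≫ postφ)).app (Φ.F.obj m) ≫ evFG := by
        simp only [Functor.map_comp, NatTrans.comp_app, Category.assoc, hpostφ, reassoc_of% hbrF]

/-- For `C`-module functors `F, G : D → E`, a `C`-module natural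
transformation `φ : F → G`, and objects `m, n` with all internal homs existing, the square
`[φ_m, G(n)] ∘ [G] = [F(m), φ_n] ∘ [F]` commutes as morphisms `[m,n] → [F(m), G(n)]`. -/
theorem moduleNatTrans_internalHom_square
    {C : Type u₁} [Category.{v₁} C] [MonoidalCategory C]
    {D : Type u₂} [Category.{v₂} D] {E : Type u₃} [Category.{v₃} E]
    (P : CModule C D) (Q : CModule C E)
    (Φ Ψ : CModuleFunctor P Q)
    (φ : Φ.F ⟶ Ψ.F) (hφ : IsModuleNatTrans Φ Ψ φ)
    (m n : D)
    (Hmn : C) (evmn : (P.act.obj Hmn).obj m ⟶ n) (hmn : P.IsInternalHom m n Hmn evmn)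
    (KF : C) (evF : (Q.act.obj KF).obj (Φ.F.obj m) ⟶ Φ.F.obj n)
    (hKF : Q.IsInternalHom (Φ.F.obj m) (Φ.F.obj n) KF evF)
    (KG : C) (evG : (Q.act.obj KG).obj (Ψ.F.obj m) ⟶ Ψ.F.obj n)
    (hKG : Q.IsInternalHom (Ψ.F.obj m) (Ψ.F.obj n) KG evG)
    (KFG : C) (evFG : (Q.act.obj KFG).obj (Φ.F.obj m) ⟶ Ψ.F.obj n)
    (hKFG : Q.IsInternalHom (Φ.F.obj m) (Ψ.F.obj n) KFG evFG)
    -- `[F] : [m,n] → [F(m),F(n)]`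
    (brF : Hmn ⟶ KF)
    (hbrF : (Q.act.map brF).app (Φ.F.obj m) ≫ evF = (Φ.e Hmn m).inv ≫ Φ.F.map evmn)
    -- `[G] : [m,n] → [G(m),G(n)]`
    (brG : Hmn ⟶ KG)
    (hbrG : (Q.act.map brG).app (Ψ.F.obj m) ≫ evG = (Ψ.e Hmn m).inv ≫ Ψ.F.map evmn)
    -- `[F(m), φ_n] : [F(m),F(n)] → [F(m),G(n)]`
    (postφ : KF ⟶ KFG)
    (hpostφ : (Q.act.map postφ).app (Φ.F.obj m) ≫ evFG = evF ≫ φ.app n)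
    -- `[φ_m, G(n)] : [G(m),G(n)] → [F(m),G(n)]`
    (preφ : KG ⟶ KFG)
    (hpreφ : (Q.act.map preφ).app (Φ.F.obj m) ≫ evFG
      = (Q.act.obj KG).map (φ.app m) ≫ evG) :
    brG ≫ preφ = brF ≫ postφ :=
  moduleNatTrans_internalHom_square_general P Q Φ Ψ φ hφ m n Hmn evmn KF evF KG evG KFG evFG hKFG
    brF hbrF brG hbrG postφ hpostφ preφ hpreφ
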